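/- arXiv:math/0406439 — 5 statements merged into one kernel-verified Lean document; each statement's English description precedes it below -/
import Mathlib

section
/- Let r : ℝ → ℝ be smooth and positive with r + r'' > 0 everywhere, and define I(θ) = −(1/2)·(r·r''' + 3r'·r'' + 4r·r')/(√r·(r + r'')^{3/2}). Then for any smooth positive function λ(θ) satisfying dλ/λ = I·√((r + r'')/r)·dθ, one has λ(θ) = c/(r(θ)·√(r(θ)·(r(θ) + r''(θ)))) for some constant c > 0. -/
open Real

private lemma coeff_eq (a b L N : ℝ) (ha : a ≠ 0) (hb : b ≠ 0) :
    L * (-(1/2) * N / (a * ((b*b) * b))) * (b / a) = -(L * N / (2 * ((a*a) * (b*b)))) := by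
  field_simp

private lemma deriv_zero_eq (s p v L N d w q : ℝ) (hs0 : s ≠ 0) (hs : s * s = p * v)
    (hN : N = p * w + 3 * d * q + 4 * p * d) (hv : v = p + q) (hp : p ≠ 0) (hvne : v ≠ 0) :
    -(L * N / (2 * (p * v))) * (p * s) + L * (d * s + p * ((d * v + p * (d + w)) / (2 * s))) = 0 := by
  subst hN hv
  field_simp
  linear_combination (-(L*p*w) - 2*L*p*d - L*d*q) * hs

theorem lambda_closed_form (r : ℝ → ℝ) (hr : ContDiff ℝ (⊤ : ℕ∞) r)
    (hpos : ∀ θ, r θ > 0) (hconv : ∀ θ, r θ + deriv^[2] r θ > 0)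
    (lam : ℝ → ℝ) (hlam : ContDiff ℝ (⊤ : ℕ∞) lam) (hlampos : ∀ θ, lam θ > 0)
    (hode : ∀ θ : ℝ, deriv lam θ = lam θ *
      (-(1/2) * (r θ * deriv^[3] r θ + 3 * deriv r θ * deriv^[2] r θ
          + 4 * r θ * deriv r θ)
        / (Real.sqrt (r θ) * (r θ + deriv^[2] r θ) ^ ((3:ℝ)/2))) *
      Real.sqrt ((r θ + deriv^[2] r θ) / r θ)) :
    ∃ c > 0, ∀ θ : ℝ,
      lam θ = c / (r θ * Real.sqrt (r θ * (r θ + deriv^[2] r θ))) := by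
  set v : ℝ → ℝ := fun θ => r θ + deriv^[2] r θ with hv
  have hr' : ContDiff ℝ (⊤ : ℕ∞) r := hr.of_le (by simp)
  have hr1 : Differentiable ℝ r := hr'.differentiable (by simp)
  have hr3 : Differentiable ℝ (deriv^[2] r) :=
    (hr'.iterate_deriv 2).differentiable (by simp)
  have hlam1 : Differentiable ℝ lam :=
    (hlam.of_le (by simp) : ContDiff ℝ (⊤:ℕ∞) lam).differentiable (by simp)
  have hd3 : ∀ θ, deriv (deriv^[2] r) θ = deriv^[3] r θ := fun θ =>
    (congrFun (Function.iterate_succ_apply' deriv 2 r) θ).symm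
  set f : ℝ → ℝ := fun θ => r θ * Real.sqrt (r θ * v θ) with hf
  have hfpos : ∀ θ, 0 < f θ := fun θ =>
    mul_pos (hpos θ) (Real.sqrt_pos.mpr (mul_pos (hpos θ) (hconv θ)))
  have hvd : ∀ θ, HasDerivAt v (deriv r θ + deriv^[3] r θ) θ := by
    intro θ
    exact ((hr1 θ).hasDerivAt.add (hr3 θ).hasDerivAt).congr_deriv (by rw [hd3])
  have hfd : ∀ θ, HasDerivAt f
      (deriv r θ * Real.sqrt (r θ * v θ)
        + r θ * ((deriv r θ * v θ + r θ * (deriv r θ + deriv^[3] r θ))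
            / (2 * Real.sqrt (r θ * v θ)))) θ := by
    intro θ
    have h1 : HasDerivAt (fun θ => r θ * v θ)
        (deriv r θ * v θ + r θ * (deriv r θ + deriv^[3] r θ)) θ :=
      (hr1 θ).hasDerivAt.mul (hvd θ)
    exact (hr1 θ).hasDerivAt.mul
      (HasDerivAt.sqrt h1 (ne_of_gt (mul_pos (hpos θ) (hconv θ))))
  have hode' : ∀ θ, deriv lam θ =
      -(lam θ * (r θ * deriv^[3] r θ + 3 * deriv r θ * deriv^[2] r θ
          + 4 * r θ * deriv r θ) / (2 * (r θ * v θ))) := by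
    intro θ
    have hrp := hpos θ
    have hvp := hconv θ
    have hsr : (0:ℝ) < Real.sqrt (r θ) := Real.sqrt_pos.mpr hrp
    have hsv : (0:ℝ) < Real.sqrt (v θ) := Real.sqrt_pos.mpr hvp
    have e1 : (v θ) ^ ((3:ℝ)/2) = v θ * Real.sqrt (v θ) := by
      rw [show ((3:ℝ)/2) = (1:ℝ) + 1/2 by ring, Real.rpow_add hvp, Real.rpow_one,
        ← Real.sqrt_eq_rpow]
    have e2 : Real.sqrt (v θ / r θ) = Real.sqrt (v θ) / Real.sqrt (r θ) :=
      Real.sqrt_div hvp.le _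
    rw [hode θ]
    rw [show r θ + deriv^[2] r θ = v θ from rfl, e1, e2]
    have hsr2 : Real.sqrt (r θ) * Real.sqrt (r θ) = r θ := Real.mul_self_sqrt hrp.le
    have hsv2 : Real.sqrt (v θ) * Real.sqrt (v θ) = v θ := Real.mul_self_sqrt hvp.le
    have key := coeff_eq (Real.sqrt (r θ)) (Real.sqrt (v θ)) (lam θ)
      (r θ * deriv^[3] r θ + 3 * deriv r θ * deriv^[2] r θ + 4 * r θ * deriv r θ)
      (ne_of_gt hsr) (ne_of_gt hsv)
    rw [hsr2, hsv2] at key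
    exact key
  set g : ℝ → ℝ := fun θ => lam θ * f θ with hg
  have hgd : ∀ θ, HasDerivAt g 0 θ := by
    intro θ
    have hd := (hlam1 θ).hasDerivAt.mul (hfd θ)
    rw [hode' θ] at hd
    have key := deriv_zero_eq (Real.sqrt (r θ * v θ)) (r θ) (v θ) (lam θ)
      (r θ * deriv^[3] r θ + 3 * deriv r θ * deriv^[2] r θ + 4 * r θ * deriv r θ)
      (deriv r θ) (deriv^[3] r θ) (deriv^[2] r θ)
      (ne_of_gt (Real.sqrt_pos.mpr (mul_pos (hpos θ) (hconv θ))))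
      (Real.mul_self_sqrt (mul_pos (hpos θ) (hconv θ)).le)
      (by ring) rfl (ne_of_gt (hpos θ)) (ne_of_gt (hconv θ))
    have : HasDerivAt g
      (-(lam θ * (r θ * deriv^[3] r θ + 3 * deriv r θ * deriv^[2] r θ
          + 4 * r θ * deriv r θ) / (2 * (r θ * v θ))) * (r θ * Real.sqrt (r θ * v θ))
        + lam θ * (deriv r θ * Real.sqrt (r θ * v θ)
          + r θ * ((deriv r θ * v θ + r θ * (deriv r θ + deriv^[3] r θ))
            / (2 * Real.sqrt (r θ * v θ))))) θ := hd
    rw [key] at this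
    exact this
  have hconst : ∀ θ, g θ = g 0 := fun θ =>
    is_const_of_deriv_eq_zero (fun x => (hgd x).differentiableAt)
      (fun x => (hgd x).deriv) θ 0
  refine ⟨g 0, mul_pos (hlampos 0) (hfpos 0), fun θ => ?_⟩
  have h := hconst θ
  have hne : f θ ≠ 0 := ne_of_gt (hfpos θ)
  show lam θ = g 0 / f θ
  rw [eq_div_iff hne]
  exact h
end

section
/- Let r : ℝ → ℝ be smooth, 2π-periodic, positive, with r + r'' > 0 everywhere, let R = 1/r, u(θ) = R cos θ, v(θ) = R sin θ. If for some θ, θ₀ one has u'(θ) = (r(θ₀)²/r(θ)²)·u'(θ₀) and v'(θ) = (r(θ₀)²/r(θ)²)·v'(θ₀), with strong convexity (u''v' − u'v'')/(u'v − uv') > 0 everywhere, then θ ≡ θ₀ (mod 2π). -/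
open Real

theorem tangent_map_injective (r : ℝ → ℝ) (hr : ContDiff ℝ (⊤ : ℕ∞) r)
    (hper : Function.Periodic r (2 * Real.pi)) (hpos : ∀ θ, r θ > 0)
    (hconv : ∀ θ, r θ + deriv^[2] r θ > 0)
    (u v : ℝ → ℝ)
    (hu : ∀ θ, u θ = (1 / r θ) * Real.cos θ)
    (hv : ∀ θ, v θ = (1 / r θ) * Real.sin θ)
    (hstrong : ∀ θ, (deriv^[2] u θ * deriv v θ - deriv u θ * deriv^[2] v θ)
        / (deriv u θ * v θ - u θ * deriv v θ) > 0)
    (θ θ₀ : ℝ)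
    (hu' : deriv u θ = (r θ₀ ^ 2 / r θ ^ 2) * deriv u θ₀)
    (hv' : deriv v θ = (r θ₀ ^ 2 / r θ ^ 2) * deriv v θ₀) :
    ∃ n : ℤ, θ = θ₀ + n * (2 * Real.pi) := by
  have hdr : Differentiable ℝ r := hr.differentiable (by simp)
  have hrinf : ContDiff ℝ ((⊤ : ℕ∞) : WithTop ℕ∞) r := hr.of_le (by simp)
  have hr' : ContDiff ℝ ((⊤ : ℕ∞) : WithTop ℕ∞) (deriv r) := (contDiff_infty_iff_deriv.mp hrinf).2
  have hdr' : Differentiable ℝ (deriv r) := hr'.differentiable (by norm_num)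
  have hne : ∀ s, r s ≠ 0 := fun s => ne_of_gt (hpos s)
  have h2iter : ∀ s, deriv^[2] r s = deriv (deriv r) s := fun s => by
    simp [Function.iterate_succ, Function.iterate_one]
  -- derivatives of u and v
  have hueq : u = fun s => Real.cos s / r s := by
    funext s; rw [hu s, one_div, inv_mul_eq_div]
  have hveq : v = fun s => Real.sin s / r s := by
    funext s; rw [hv s, one_div, inv_mul_eq_div]
  have hdu : ∀ s, deriv u s = (-Real.sin s * r s - Real.cos s * deriv r s) / r s ^ 2 := by
    intro s
    rw [hueq]
    exact ((Real.hasDerivAt_cos s).div ((hdr s).hasDerivAt) (hne s)).deriv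
  have hdv : ∀ s, deriv v s = (Real.cos s * r s - Real.sin s * deriv r s) / r s ^ 2 := by
    intro s
    rw [hveq]
    exact ((Real.hasDerivAt_sin s).div ((hdr s).hasDerivAt) (hne s)).deriv
  set F : ℝ → ℝ := fun s => r s * Real.sin s + deriv r s * Real.cos s with hFdef
  set G : ℝ → ℝ := fun s => r s * Real.cos s - deriv r s * Real.sin s with hGdef
  have hFeq : F θ = F θ₀ := by
    have h := hu'
    rw [hdu θ, hdu θ₀] at h
    have h0 := hne θ
    have h1 := hne θ₀
    field_simp at h
    have hK : (r θ ^ 2 * r θ₀ ^ 2) ≠ 0 := by positivity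
    have h' : (-(Real.sin θ * r θ) - Real.cos θ * deriv r θ) * (r θ ^ 2 * r θ₀ ^ 2)
        = (-(Real.sin θ₀ * r θ₀) - Real.cos θ₀ * deriv r θ₀) * (r θ ^ 2 * r θ₀ ^ 2) := by
      linear_combination (r θ ^ 2 * r θ₀ ^ 2) * h
    have h'' := mul_right_cancel₀ hK h'
    simp only [hFdef]
    linarith [h'']
  have hGeq : G θ = G θ₀ := by
    have h := hv'
    rw [hdv θ, hdv θ₀] at h
    have h0 := hne θ
    have h1 := hne θ₀
    field_simp at h
    have hK : (r θ ^ 2 * r θ₀ ^ 2) ≠ 0 := by positivity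
    have h' : (Real.cos θ * r θ - Real.sin θ * deriv r θ) * (r θ ^ 2 * r θ₀ ^ 2)
        = (Real.cos θ₀ * r θ₀ - Real.sin θ₀ * deriv r θ₀) * (r θ ^ 2 * r θ₀ ^ 2) := by
      linear_combination (r θ ^ 2 * r θ₀ ^ 2) * h
    have h'' := mul_right_cancel₀ hK h'
    simp only [hGdef]
    linarith [h'']
  -- angle representation
  set a : ℝ → ℝ := fun s => Real.arctan (deriv r s / r s) with hadef
  set m : ℝ → ℝ := fun s => Real.sqrt (r s ^ 2 + deriv r s ^ 2) with hmdef
  have hmpos : ∀ s, 0 < m s := by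
    intro s
    have := hpos s
    exact Real.sqrt_pos.mpr (by positivity)
  have hsq : ∀ s, 1 + (deriv r s / r s) ^ 2 = (r s ^ 2 + deriv r s ^ 2) / r s ^ 2 := by
    intro s
    have h0 := hne s
    field_simp
  have hsqrt : ∀ s, Real.sqrt (1 + (deriv r s / r s) ^ 2) = m s / r s := by
    intro s
    rw [hsq s, Real.sqrt_div (by positivity), Real.sqrt_sq (hpos s).le]
  have hcosa : ∀ s, m s * Real.cos (a s) = r s := by
    intro s
    simp only [hadef]
    rw [Real.cos_arctan, hsqrt s]
    have h0 := hne s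
    have h1 := (hmpos s).ne'
    field_simp
  have hsina : ∀ s, m s * Real.sin (a s) = deriv r s := by
    intro s
    simp only [hadef]
    rw [Real.sin_arctan, hsqrt s]
    have h0 := hne s
    have h1 := (hmpos s).ne'
    field_simp
  have hGm : ∀ s, G s = m s * Real.cos (s + a s) := by
    intro s
    rw [Real.cos_add]
    calc G s = Real.cos s * (m s * Real.cos (a s)) - Real.sin s * (m s * Real.sin (a s)) := by
          rw [hcosa s, hsina s]; simp only [hGdef]; ring
      _ = m s * (Real.cos s * Real.cos (a s) - Real.sin s * Real.sin (a s)) := by ring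
  have hFm : ∀ s, F s = m s * Real.sin (s + a s) := by
    intro s
    rw [Real.sin_add]
    calc F s = Real.sin s * (m s * Real.cos (a s)) + Real.cos s * (m s * Real.sin (a s)) := by
          rw [hcosa s, hsina s]; simp only [hFdef]; ring
      _ = m s * (Real.sin s * Real.cos (a s) + Real.cos s * Real.sin (a s)) := by ring
  have hmFG : ∀ s, m s = Real.sqrt (F s ^ 2 + G s ^ 2) := by
    intro s
    have h : F s ^ 2 + G s ^ 2 = r s ^ 2 + deriv r s ^ 2 := by
      have hsc := Real.sin_sq_add_cos_sq s
      simp only [hFdef, hGdef]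
      nlinarith [hsc]
    rw [hmdef, h]
  have hmeq : m θ = m θ₀ := by rw [hmFG θ, hmFG θ₀, hFeq, hGeq]
  have hcoseq : Real.cos (θ + a θ) = Real.cos (θ₀ + a θ₀) := by
    have h1 := hGm θ
    have h2 := hGm θ₀
    rw [hGeq, hmeq] at h1
    exact mul_left_cancel₀ (hmpos θ₀).ne' (h1.symm.trans h2)
  have hsineq : Real.sin (θ + a θ) = Real.sin (θ₀ + a θ₀) := by
    have h1 := hFm θ
    have h2 := hFm θ₀
    rw [hFeq, hmeq] at h1
    exact mul_left_cancel₀ (hmpos θ₀).ne' (h1.symm.trans h2)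
  have hang : ((θ + a θ : ℝ) : Real.Angle) = ((θ₀ + a θ₀ : ℝ) : Real.Angle) :=
    Real.Angle.cos_sin_inj hcoseq hsineq
  obtain ⟨k, hk⟩ := Real.Angle.angle_eq_iff_two_pi_dvd_sub.mp hang
  -- monotonicity of A
  set A : ℝ → ℝ := fun s => s + a s with hAdef
  have hA' : ∀ s, HasDerivAt A (r s * (r s + deriv (deriv r) s) / (r s ^ 2 + deriv r s ^ 2)) s := by
    intro s
    have hq : HasDerivAt (fun x => deriv r x / r x)
        ((deriv (deriv r) s * r s - deriv r s * deriv r s) / r s ^ 2) s :=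
      (hdr' s).hasDerivAt.div ((hdr s).hasDerivAt) (hne s)
    have harc : HasDerivAt (fun x => Real.arctan (deriv r x / r x))
        (1 / (1 + (deriv r s / r s) ^ 2) *
          ((deriv (deriv r) s * r s - deriv r s * deriv r s) / r s ^ 2)) s :=
      (Real.hasDerivAt_arctan _).comp s hq
    have hsum := (hasDerivAt_id s).add harc
    have hval : (1 : ℝ) + 1 / (1 + (deriv r s / r s) ^ 2) *
        ((deriv (deriv r) s * r s - deriv r s * deriv r s) / r s ^ 2)
        = r s * (r s + deriv (deriv r) s) / (r s ^ 2 + deriv r s ^ 2) := by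
      have h0 := hne s
      have hpos' : (0:ℝ) < r s ^ 2 + deriv r s ^ 2 := by positivity
      field_simp
      ring
    rw [hval] at hsum
    exact hsum
  have hApos : ∀ s, 0 < deriv A s := by
    intro s
    rw [(hA' s).deriv]
    have hc := hconv s
    rw [h2iter s] at hc
    have hpos' : (0:ℝ) < r s ^ 2 + deriv r s ^ 2 := by
      have := hpos s; positivity
    exact div_pos (mul_pos (hpos s) hc) hpos'
  have hmono : StrictMono A := strictMono_of_deriv_pos hApos
  -- periodicity of a
  have hper' : Function.Periodic (deriv r) (2 * Real.pi) := by
    intro x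
    have h : deriv (fun y => r (y + 2 * Real.pi)) x = deriv r x := by
      congr 1; funext y; exact hper y
    rw [deriv_comp_add_const] at h
    exact h
  have haper : Function.Periodic a (2 * Real.pi) := by
    intro x
    simp only [hadef]
    rw [hper' x, hper x]
  refine ⟨k, ?_⟩
  have hak : a (θ₀ + k * (2 * Real.pi)) = a θ₀ := (haper.int_mul k) θ₀
  have hAeq : A θ = A (θ₀ + k * (2 * Real.pi)) := by
    simp only [hAdef]
    rw [hak]
    linarith [hk]
  have := hmono.injective hAeq
  linarith [this]
end

section
/- There is no smooth, 2π-periodic, positive function r : ℝ → ℝ with r + r'' > 0 everywhere such that −(1/2)(r r''' + 3 r' r'' + 4 r r')/(√r (r + r'')^{3/2}) is equal to a nonzero constant. -/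
open Real

theorem no_constant_nonzero_invariant :
    ¬ ∃ (r : ℝ → ℝ) (c : ℝ), ContDiff ℝ (⊤ : ℕ∞) r ∧
      Function.Periodic r (2 * Real.pi) ∧ (∀ θ, r θ > 0) ∧
      (∀ θ, r θ + deriv^[2] r θ > 0) ∧ c ≠ 0 ∧
      (∀ θ, -(1/2) * (r θ * deriv^[3] r θ + 3 * deriv r θ * deriv^[2] r θ
          + 4 * r θ * deriv r θ)
        / (Real.sqrt (r θ) * (r θ + deriv^[2] r θ) ^ ((3:ℝ)/2)) = c) := by
  rintro ⟨r, c, hs, hp, hr0, hrr, hc, heq⟩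
  -- smoothness of iterated derivatives
  have hsmooth : ∀ n : ℕ, ContDiff ℝ (⊤ : ℕ∞) (deriv^[n] r) :=
    fun n => ContDiff.iterate_deriv n (hs.of_le (by simp))
  have hdiff : ∀ n : ℕ, Differentiable ℝ (deriv^[n] r) :=
    fun n => (hsmooth n).differentiable (by simp)
  -- periodicity of iterated derivatives
  have hper : ∀ n : ℕ, Function.Periodic (deriv^[n] r) (2 * Real.pi) := by
    intro n
    induction n with
    | zero => exact hp
    | succ k ih =>
      rw [Function.iterate_succ_apply']
      intro θ
      rw [← deriv_comp_add_const]
      congr 1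
      funext x
      exact ih x
  -- F = r r'' + r'^2 + 2 r^2
  set F : ℝ → ℝ := fun θ => r θ * deriv^[2] r θ + (deriv r θ)^2 + 2 * (r θ)^2
    with hF
  have hFper : Function.Periodic F (2 * Real.pi) := by
    intro θ
    simp only [hF]
    rw [hp θ, show deriv r (θ + 2 * Real.pi) = deriv r θ from hper 1 θ,
      show deriv^[2] r (θ + 2 * Real.pi) = deriv^[2] r θ from hper 2 θ]
  have hFd : ∀ θ, HasDerivAt F
      (r θ * deriv^[3] r θ + 3 * deriv r θ * deriv^[2] r θ + 4 * r θ * deriv r θ) θ := by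
    intro θ
    have h0 : HasDerivAt r (deriv r θ) θ := ((hdiff 0) θ).hasDerivAt
    have h1 : HasDerivAt (deriv r) (deriv^[2] r θ) θ := by
      have := ((hdiff 1) θ).hasDerivAt
      simpa [Function.iterate_succ_apply'] using this
    have h2 : HasDerivAt (deriv^[2] r) (deriv^[3] r θ) θ := by
      have := ((hdiff 2) θ).hasDerivAt
      simpa [show deriv^[3] r = deriv (deriv^[2] r) by
        rw [Function.iterate_succ_apply']] using this
    have := ((h0.mul h2).add (h1.mul h1)).add
      ((h0.mul h0).const_mul 2)
    have hfun : F = (r * deriv^[2] r + deriv r * deriv r + fun y => 2 * (r * r) y) := by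
      funext x; simp only [hF, Pi.add_apply, Pi.mul_apply]; ring
    rw [hfun]
    exact this.congr_deriv (by ring)
  -- denominator positive
  have hD : ∀ θ, 0 < Real.sqrt (r θ) * (r θ + deriv^[2] r θ) ^ ((3:ℝ)/2) :=
    fun θ => mul_pos (Real.sqrt_pos.mpr (hr0 θ)) (Real.rpow_pos_of_pos (hrr θ) _)
  -- numerator = -2 c * D
  have hnum : ∀ θ, r θ * deriv^[3] r θ + 3 * deriv r θ * deriv^[2] r θ
      + 4 * r θ * deriv r θ
      = -2 * c * (Real.sqrt (r θ) * (r θ + deriv^[2] r θ) ^ ((3:ℝ)/2)) := by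
    intro θ
    have h := heq θ
    rw [div_eq_iff (hD θ).ne'] at h
    linarith
  have hderivF : ∀ θ, deriv F θ
      = -2 * c * (Real.sqrt (r θ) * (r θ + deriv^[2] r θ) ^ ((3:ℝ)/2)) := by
    intro θ
    rw [(hFd θ).deriv]
    exact hnum θ
  have hFeq : F (2 * Real.pi) = F 0 := by simpa using hFper 0
  have hpi : (0:ℝ) < 2 * Real.pi := by positivity
  rcases hc.lt_or_gt with hneg | hpos
  · have : StrictMono F := by
      apply strictMono_of_deriv_pos
      intro x
      rw [hderivF x]
      have := hD x
      nlinarith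
    exact absurd hFeq (this hpi).ne'
  · have : StrictAnti F := by
      apply strictAnti_of_deriv_neg
      intro x
      rw [hderivF x]
      have := hD x
      nlinarith
    exact absurd hFeq (this hpi).ne
end

section
/- Consider the 1-forms on ℝ⁴ with coordinates (x, y, z, θ): η¹ = e^{r₁θ}dx + e^{r₂θ}dy, η² = −r₁e^{r₁θ}dx − r₂e^{r₂θ}dy, η³ = e^{−Iθ}√(I²−4)(dz + (1/2)(x dy − y dx)), φ = dθ, where I is a constant with I² > 4 and r₁, r₂ = (−I ± √(I²−4))/2. Then dη¹ = η² ∧ φ, dη² = −η¹ ∧ φ + I η² ∧ φ, dη³ = η¹ ∧ η² + I η³ ∧ φ, and dφ = 0. -/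
open Real

/-- The exterior derivative of a 1-form on `ℝ⁴` (a 1-form being given by its
action `ω p X` on constant vector fields `X`), evaluated on constant vectors. -/
noncomputable def extD (ω : (Fin 4 → ℝ) → (Fin 4 → ℝ) → ℝ) :
    (Fin 4 → ℝ) → (Fin 4 → ℝ) → (Fin 4 → ℝ) → ℝ :=
  fun p X Y => fderiv ℝ (fun q => ω q Y) p X - fderiv ℝ (fun q => ω q X) p Y

/-- The wedge product of two 1-forms on `ℝ⁴`. -/
def wedge (α β : (Fin 4 → ℝ) → (Fin 4 → ℝ) → ℝ) :
    (Fin 4 → ℝ) → (Fin 4 → ℝ) → (Fin 4 → ℝ) → ℝ :=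
  fun p X Y => α p X * β p Y - α p Y * β p X

/-! With `θ = p 3`, the forms `η¹, η²` have `dx, dy`-coefficients depending on `θ` only, so
their derivatives are `dθ ∧ dx` and `dθ ∧ dy` terms; `η³ = h(θ) κ` with `κ = dz + ½(x dy - y dx)`,
and `dκ = dx ∧ dy`. The structure equations then reduce to `r₁ + r₂ = -I`, `r₁ r₂ = 1`,
`√(I² - 4) = r₁ - r₂` and `e^{-Iθ} = e^{r₁θ} e^{r₂θ}`. -/

noncomputable def heisenbergForm (q X : Fin 4 → ℝ) : ℝ :=
  X 2 + 1 / 2 * (q 0 * X 1 - q 1 * X 0)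

lemma extD_apply_of_hasFDerivAt {ω : (Fin 4 → ℝ) → (Fin 4 → ℝ) → ℝ} {p : Fin 4 → ℝ}
    {L : (Fin 4 → ℝ) → (Fin 4 → ℝ) →L[ℝ] ℝ} (hω : ∀ Z, HasFDerivAt (fun q => ω q Z) (L Z) p)
    (X Y : Fin 4 → ℝ) : extD ω p X Y = L Y X - L X Y := by
  simp only [extD, (hω X).fderiv, (hω Y).fderiv]

lemma hasFDerivAt_comp_apply {ι : Type*} [Fintype ι] {f : ℝ → ℝ} {f' : ℝ} (i : ι)
    {p : ι → ℝ} (hf : HasDerivAt f f' (p i)) :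
    HasFDerivAt (fun q : ι → ℝ => f (q i)) (f' • ContinuousLinearMap.proj (R := ℝ) i) p :=
  hf.comp_hasFDerivAt p (hasFDerivAt_apply (𝕜 := ℝ) i p)

lemma extD_eq_zero_of_const {ω : (Fin 4 → ℝ) → (Fin 4 → ℝ) → ℝ} {α : (Fin 4 → ℝ) → ℝ}
    (hω : ∀ q X, ω q X = α X) (p X Y : Fin 4 → ℝ) : extD ω p X Y = 0 := by
  obtain rfl := funext₂ hω
  exact (extD_apply_of_hasFDerivAt (L := fun _ => 0) (fun Z => hasFDerivAt_const (α Z) p)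
    X Y).trans (sub_self 0)

lemma extD_eq_of_dx_dy {ω : (Fin 4 → ℝ) → (Fin 4 → ℝ) → ℝ} {f g : ℝ → ℝ} {f' g' : ℝ}
    {p : Fin 4 → ℝ} (hω : ∀ q X, ω q X = f (q 3) * X 0 + g (q 3) * X 1)
    (hf : HasDerivAt f f' (p 3)) (hg : HasDerivAt g g' (p 3)) (X Y : Fin 4 → ℝ) :
    extD ω p X Y = f' * (X 3 * Y 0 - Y 3 * X 0) + g' * (X 3 * Y 1 - Y 3 * X 1) := by
  obtain rfl := funext₂ hω
  refine (extD_apply_of_hasFDerivAt (fun Z => ((hasFDerivAt_comp_apply 3 hf).mul_const (Z 0)).add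
      ((hasFDerivAt_comp_apply 3 hg).mul_const (Z 1))) X Y).trans ?_
  simp only [add_apply, smul_apply, ContinuousLinearMap.proj_apply, smul_eq_mul]
  ring

lemma extD_eq_of_heisenbergForm {ω : (Fin 4 → ℝ) → (Fin 4 → ℝ) → ℝ} {h : ℝ → ℝ} {h' : ℝ}
    {p : Fin 4 → ℝ} (hω : ∀ q X, ω q X = h (q 3) * heisenbergForm q X)
    (hh : HasDerivAt h h' (p 3)) (X Y : Fin 4 → ℝ) :
    extD ω p X Y = h' * (X 3 * heisenbergForm p Y - Y 3 * heisenbergForm p X)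
      + h (p 3) * (X 0 * Y 1 - X 1 * Y 0) := by
  have hκ (Z : Fin 4 → ℝ) := ((((hasFDerivAt_apply (𝕜 := ℝ) 0 p).mul_const (Z 1)).sub
    ((hasFDerivAt_apply (𝕜 := ℝ) 1 p).mul_const (Z 0))).const_mul (1 / 2 : ℝ)).const_add (Z 2)
  obtain rfl := funext₂ hω
  refine (extD_apply_of_hasFDerivAt (fun Z => (hasFDerivAt_comp_apply 3 hh).mul (hκ Z))
    X Y).trans ?_
  simp only [heisenbergForm, add_apply, smul_apply, sub_apply, Pi.sub_apply,
    ContinuousLinearMap.proj_apply, smul_eq_mul]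
  ring

theorem homogeneous_structure_equations_hyperbolic (I : ℝ) (hI : I ^ 2 > 4)
    (r₁ r₂ : ℝ) (hr₁ : r₁ = (-I + Real.sqrt (I ^ 2 - 4)) / 2)
    (hr₂ : r₂ = (-I - Real.sqrt (I ^ 2 - 4)) / 2)
    (η₁ η₂ η₃ φ : (Fin 4 → ℝ) → (Fin 4 → ℝ) → ℝ)
    (hη₁ : ∀ p X, η₁ p X = Real.exp (r₁ * p 3) * X 0 + Real.exp (r₂ * p 3) * X 1)
    (hη₂ : ∀ p X, η₂ p X = -r₁ * Real.exp (r₁ * p 3) * X 0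
        - r₂ * Real.exp (r₂ * p 3) * X 1)
    (hη₃ : ∀ p X, η₃ p X = Real.exp (-I * p 3) * Real.sqrt (I ^ 2 - 4) *
        (X 2 + (1/2) * (p 0 * X 1 - p 1 * X 0)))
    (hφ : ∀ p X, φ p X = X 3) :
    ∀ p X Y,
      extD η₁ p X Y = wedge η₂ φ p X Y ∧
      extD η₂ p X Y = -wedge η₁ φ p X Y + I * wedge η₂ φ p X Y ∧
      extD η₃ p X Y = wedge η₁ η₂ p X Y + I * wedge η₃ φ p X Y ∧
      extD φ p X Y = 0 := by
  have hsqrt : Real.sqrt (I ^ 2 - 4) ^ 2 = I ^ 2 - 4 := Real.sq_sqrt (by linarith)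
  have hsum : r₁ + r₂ = -I := by rw [hr₁, hr₂]; ring
  have hprod : r₁ * r₂ = 1 := by rw [hr₁, hr₂]; linear_combination (-1 / 4 : ℝ) * hsqrt
  have hdiff : Real.sqrt (I ^ 2 - 4) = r₁ - r₂ := by rw [hr₁, hr₂]; ring
  have hroot₁ : r₁ ^ 2 = -1 - I * r₁ := by linear_combination r₁ * hsum - hprod
  have hroot₂ : r₂ ^ 2 = -1 - I * r₂ := by linear_combination r₂ * hsum - hprod
  intro p X Y
  have hexp (r : ℝ) : HasDerivAt (fun t => Real.exp (r * t)) (r * Real.exp (r * p 3)) (p 3) := by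
    simpa [mul_comm] using ((hasDerivAt_id (p 3)).const_mul r).exp
  refine ⟨?_, ?_, ?_, extD_eq_zero_of_const hφ p X Y⟩
  · rw [extD_eq_of_dx_dy hη₁ (hexp r₁) (hexp r₂)]
    simp only [wedge, hη₂, hφ]
    ring
  · rw [extD_eq_of_dx_dy (fun q X => by rw [hη₂]; ring) ((hexp r₁).const_mul (-r₁))
      ((hexp r₂).const_mul (-r₂))]
    simp only [wedge, hη₁, hη₂, hφ]
    linear_combination Real.exp (r₁ * p 3) * (X 0 * Y 3 - X 3 * Y 0) * hroot₁
      + Real.exp (r₂ * p 3) * (X 1 * Y 3 - X 3 * Y 1) * hroot₂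
  · rw [extD_eq_of_heisenbergForm hη₃ ((hexp (-I)).mul_const _)]
    have hexp_sum : Real.exp (-I * p 3) = Real.exp (r₁ * p 3) * Real.exp (r₂ * p 3) := by
      rw [← Real.exp_add, ← add_mul, hsum]
    simp only [wedge, heisenbergForm, hη₁, hη₂, hη₃, hφ, hexp_sum, hdiff]
    ring
end

section
/- Consider the 1-forms on ℝ⁴ with coordinates (x, y, z, θ): η¹ = e^{−θ}((1+θ)dx − θ dy), η² = e^{−θ}(θ dx + (1−θ)dy), η³ = e^{−2θ}(dz + (1/2)(x dy − y dx)), φ = dθ. Then dη¹ = η² ∧ φ, dη² = −η¹ ∧ φ + 2 η² ∧ φ, dη³ = η¹ ∧ η² + 2 η³ ∧ φ, and dφ = 0. -/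
open Real

/-!
Write `ηⁱ = e^{kθ} βⁱ` with `k = -1, -1, -2`, where `β¹ = (1 + θ) dx - θ dy`,
`β² = θ dx + (1 - θ) dy` and `β³ = dz + (x dy - y dx) / 2` have coefficients affine in
`(x, y, θ)`. The Leibniz rule gives `dηⁱ = k φ ∧ ηⁱ + e^{kθ} dβⁱ`, and
`dβ¹ = dβ² = φ ∧ (dx - dy)`, `dβ³ = dx ∧ dy`. The structure equations follow from
`e^{-θ} (dx - dy) = η¹ - η²` and `e^{-2θ} dx ∧ dy = η¹ ∧ η²`.
-/

open ContinuousLinearMap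

namespace HomogeneousSubFinsler

variable {p : Fin 4 → ℝ}

theorem extD_apply_of_eq_mul {ω β : (Fin 4 → ℝ) → (Fin 4 → ℝ) → ℝ} {f : (Fin 4 → ℝ) → ℝ}
    (hω : ∀ q Z, ω q Z = f q * β q Z) (hf : DifferentiableAt ℝ f p)
    (hβ : ∀ Z, DifferentiableAt ℝ (fun q => β q Z) p) (X Y : Fin 4 → ℝ) :
    extD ω p X Y = wedge (fun q => fderiv ℝ f q) β p X Y + f p * extD β p X Y := by
  simp only [extD, wedge, hω, fderiv_fun_mul hf (hβ _), add_apply, smul_apply, smul_eq_mul]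
  ring

theorem extD_const_apply (ω₀ : (Fin 4 → ℝ) → ℝ) (X Y : Fin 4 → ℝ) :
    extD (fun _ => ω₀) p X Y = 0 := by
  simp [extD]

theorem fderiv_coord (i : Fin 4) : fderiv ℝ (fun q : Fin 4 → ℝ => q i) p = proj i :=
  (hasFDerivAt_apply i p).fderiv

theorem fderiv_exp_mul_coord (k : ℝ) (i : Fin 4) :
    fderiv ℝ (fun q : Fin 4 → ℝ => exp (k * q i)) p = (k * exp (k * p i)) • proj i := by
  rw [((hasFDerivAt_apply i p).const_mul k).exp.fderiv, smul_smul, mul_comm]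

theorem fderiv_exp_neg_coord (i : Fin 4) :
    fderiv ℝ (fun q : Fin 4 → ℝ => exp (-q i)) p = -exp (-p i) • proj i := by
  simpa using fderiv_exp_mul_coord (p := p) (-1) i

def β₁ (q Z : Fin 4 → ℝ) : ℝ := (1 + q 3) * Z 0 - q 3 * Z 1

def β₂ (q Z : Fin 4 → ℝ) : ℝ := q 3 * Z 0 + (1 - q 3) * Z 1

noncomputable def β₃ (q Z : Fin 4 → ℝ) : ℝ := Z 2 + 1 / 2 * (q 0 * Z 1 - q 1 * Z 0)

theorem extD_β₁ (X Y : Fin 4 → ℝ) : extD β₁ p X Y = X 3 * (Y 0 - Y 1) - Y 3 * (X 0 - X 1) := by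
  simp (disch := fun_prop) only [extD, β₁, fderiv_fun_sub, fderiv_mul_const, fderiv_const_add,
    fderiv_coord, sub_apply, smul_apply, proj_apply, smul_eq_mul]
  ring

theorem extD_β₂ (X Y : Fin 4 → ℝ) : extD β₂ p X Y = X 3 * (Y 0 - Y 1) - Y 3 * (X 0 - X 1) := by
  simp (disch := fun_prop) only [extD, β₂, fderiv_fun_add, fderiv_mul_const, fderiv_const_sub,
    fderiv_coord, add_apply, neg_apply, smul_apply, proj_apply, smul_eq_mul]
  ring

theorem extD_β₃ (X Y : Fin 4 → ℝ) : extD β₃ p X Y = X 0 * Y 1 - X 1 * Y 0 := by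
  simp (disch := fun_prop) only [extD, β₃, fderiv_const_add, fderiv_const_mul, fderiv_fun_sub,
    fderiv_mul_const, fderiv_coord, smul_apply, sub_apply, proj_apply, smul_eq_mul]
  ring

end HomogeneousSubFinsler

open HomogeneousSubFinsler

theorem homogeneous_structure_equations_I_eq_two
    (η₁ η₂ η₃ φ : (Fin 4 → ℝ) → (Fin 4 → ℝ) → ℝ)
    (hη₁ : ∀ p X, η₁ p X = Real.exp (-p 3) * ((1 + p 3) * X 0 - p 3 * X 1))
    (hη₂ : ∀ p X, η₂ p X = Real.exp (-p 3) * (p 3 * X 0 + (1 - p 3) * X 1))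
    (hη₃ : ∀ p X, η₃ p X = Real.exp (-2 * p 3) *
        (X 2 + (1/2) * (p 0 * X 1 - p 1 * X 0)))
    (hφ : ∀ p X, φ p X = X 3) :
    ∀ p X Y,
      extD η₁ p X Y = wedge η₂ φ p X Y ∧
      extD η₂ p X Y = -wedge η₁ φ p X Y + 2 * wedge η₂ φ p X Y ∧
      extD η₃ p X Y = wedge η₁ η₂ p X Y + 2 * wedge η₃ φ p X Y ∧
      extD φ p X Y = 0 := by
  intro p X Y
  refine ⟨?_, ?_, ?_, ?_⟩
  · rw [extD_apply_of_eq_mul (β := β₁) hη₁ (by fun_prop) (fun _ => by fun_prop [β₁]), extD_β₁]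
    simp only [wedge, β₁, fderiv_exp_neg_coord, hη₂, hφ, smul_apply, proj_apply, smul_eq_mul]
    ring
  · rw [extD_apply_of_eq_mul (β := β₂) hη₂ (by fun_prop) (fun _ => by fun_prop [β₂]), extD_β₂]
    simp only [wedge, β₂, fderiv_exp_neg_coord, hη₁, hη₂, hφ, smul_apply, proj_apply, smul_eq_mul]
    ring
  · have hexp : exp (-2 * p 3) = exp (-p 3) * exp (-p 3) := by
      rw [← exp_add]; ring_nf
    rw [extD_apply_of_eq_mul (β := β₃) hη₃ (by fun_prop) (fun _ => by fun_prop [β₃]), extD_β₃]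
    simp only [wedge, β₃, fderiv_exp_mul_coord, hη₁, hη₂, hη₃, hφ, smul_apply, proj_apply,
      smul_eq_mul, hexp]
    ring
  · rw [show φ = fun _ X => X 3 from funext₂ hφ, extD_const_apply]
end
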